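/- arXiv:2602.00725 — 4 statements merged into one kernel-verified Lean document; each statement's English description precedes it below -/
import Mathlib

section
/- For every integer M ≥ 0, 2·∑_{m=0}^{M} √(m²+m) ≤ (M+1)√(M(M+2)). -/
theorem sum_sqrt_le (M : ℕ) :
    2 * ∑ m ∈ Finset.range (M + 1), Real.sqrt ((m : ℝ) ^ 2 + (m : ℝ)) ≤
      ((M : ℝ) + 1) * Real.sqrt ((M : ℝ) * ((M : ℝ) + 2)) := by
  have hsplit : ∀ m ∈ Finset.range (M + 1),
      Real.sqrt ((m : ℝ) ^ 2 + (m : ℝ)) = Real.sqrt m * Real.sqrt ((m : ℝ) + 1) := by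
    intro m _
    rw [← Real.sqrt_mul (Nat.cast_nonneg m)]
    ring_nf
  rw [Finset.sum_congr rfl hsplit]
  have key := Finset.sum_mul_sq_le_sq_mul_sq (Finset.range (M + 1))
    (fun m => Real.sqrt (m : ℝ)) (fun m => Real.sqrt ((m : ℝ) + 1))
  have hg : ∑ m ∈ Finset.range (M + 1), (m : ℝ) = (M : ℝ) * ((M : ℝ) + 1) / 2 := by
    have h := Finset.sum_range_id_mul_two (M + 1)
    have h2 : ((∑ i ∈ Finset.range (M + 1), i : ℕ) : ℝ) * 2 = ((M + 1) * M : ℕ) := by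
      exact_mod_cast congrArg (fun n : ℕ => (n : ℝ)) h
    push_cast at h2
    linarith
  have h1 : ∑ m ∈ Finset.range (M + 1), Real.sqrt (m : ℝ) ^ 2
      = (M : ℝ) * ((M : ℝ) + 1) / 2 := by
    have e : ∀ m ∈ Finset.range (M + 1), Real.sqrt (m : ℝ) ^ 2 = (m : ℝ) := by
      intro m _; exact Real.sq_sqrt (Nat.cast_nonneg m)
    rw [Finset.sum_congr rfl e]; exact hg
  have h2 : ∑ m ∈ Finset.range (M + 1), Real.sqrt ((m : ℝ) + 1) ^ 2
      = ((M : ℝ) + 1) * ((M : ℝ) + 2) / 2 := by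
    have e : ∀ m ∈ Finset.range (M + 1), Real.sqrt ((m : ℝ) + 1) ^ 2 = (m : ℝ) + 1 := by
      intro m _; exact Real.sq_sqrt (by positivity)
    rw [Finset.sum_congr rfl e, Finset.sum_add_distrib, hg]
    simp
    ring
  rw [h1, h2] at key
  have hrhs : ((M : ℝ) + 1) * Real.sqrt ((M : ℝ) * ((M : ℝ) + 2))
      = Real.sqrt (((M : ℝ) + 1) ^ 2 * ((M : ℝ) * ((M : ℝ) + 2))) := by
    rw [Real.sqrt_mul (by positivity : (0:ℝ) ≤ ((M:ℝ)+1)^2),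
      Real.sqrt_sq (by positivity : (0:ℝ) ≤ (M:ℝ)+1)]
  have hSnn : 0 ≤ ∑ m ∈ Finset.range (M + 1), Real.sqrt (m : ℝ) * Real.sqrt ((m : ℝ) + 1) :=
    Finset.sum_nonneg fun m _ => by positivity
  rw [hrhs, Real.le_sqrt (by positivity)]
  · nlinarith [key, hSnn]
  · positivity
end

section
/- Fix M ∈ ℕ and define I(ρ) = ∑_{m=0}^{M} (√ρ − √(m²+m))² for real ρ with M²+M ≤ ρ < (M+1)²+(M+1). Then I(ρ) ≥ ρ^{3/2}/3. -/
lemma sum_sq_add_aux (n : ℕ) :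
    ∑ m ∈ Finset.range n, ((m : ℝ) ^ 2 + (m : ℝ)) = (n : ℝ) * ((n : ℝ) - 1) * ((n : ℝ) + 1) / 3 := by
  induction n with
  | zero => simp
  | succ k ih =>
    rw [Finset.sum_range_succ, ih]
    push_cast
    ring

lemma sum_sqrt_le_aux (n : ℕ) :
    ∑ m ∈ Finset.range (n + 1), Real.sqrt ((m : ℝ) ^ 2 + (m : ℝ)) ≤ ((n : ℝ) ^ 2 + 2 * n) / 2 := by
  induction n with
  | zero => simp
  | succ k ih =>
    rw [Finset.sum_range_succ]
    have h : Real.sqrt (((k + 1 : ℕ) : ℝ) ^ 2 + ((k + 1 : ℕ) : ℝ)) ≤ (k : ℝ) + 3 / 2 := by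
      have h1 : (((k + 1 : ℕ) : ℝ) ^ 2 + ((k + 1 : ℕ) : ℝ)) ≤ ((k : ℝ) + 3 / 2) ^ 2 := by
        push_cast; nlinarith [Nat.cast_nonneg (α := ℝ) k]
      calc Real.sqrt (((k + 1 : ℕ) : ℝ) ^ 2 + ((k + 1 : ℕ) : ℝ))
          ≤ Real.sqrt (((k : ℝ) + 3 / 2) ^ 2) := Real.sqrt_le_sqrt h1
        _ = (k : ℝ) + 3 / 2 := Real.sqrt_sq (by positivity)
    push_cast
    push_cast at ih h
    linarith

theorem I_rho_lower_bound (M : ℕ) (ρ : ℝ) (hρ : 0 < ρ)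
    (h1 : ((M : ℝ) ^ 2 + (M : ℝ)) ≤ ρ)
    (h2 : ρ < ((M : ℝ) + 1) ^ 2 + ((M : ℝ) + 1)) :
    ∑ m ∈ Finset.range (M + 1),
        (Real.sqrt ρ - Real.sqrt ((m : ℝ) ^ 2 + (m : ℝ))) ^ 2 ≥
      ρ ^ ((3 : ℝ) / 2) / 3 := by
  have hx0 : 0 ≤ Real.sqrt ρ := Real.sqrt_nonneg ρ
  set x := Real.sqrt ρ with hxdef
  have hx2 : x ^ 2 = ρ := Real.sq_sqrt hρ.le
  set S := ∑ m ∈ Finset.range (M + 1), Real.sqrt ((m : ℝ) ^ 2 + (m : ℝ)) with hSdef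
  have hsum : ∑ m ∈ Finset.range (M + 1), (x - Real.sqrt ((m : ℝ) ^ 2 + (m : ℝ))) ^ 2
      = (M + 1) * x ^ 2 - 2 * x * S + (M : ℝ) * ((M : ℝ) + 1) * ((M : ℝ) + 2) / 3 := by
    have hcong : ∀ m ∈ Finset.range (M + 1),
        (x - Real.sqrt ((m : ℝ) ^ 2 + (m : ℝ))) ^ 2
        = x ^ 2 - 2 * x * Real.sqrt ((m : ℝ) ^ 2 + (m : ℝ)) + ((m : ℝ) ^ 2 + (m : ℝ)) := by
      intro m _
      have h := Real.sq_sqrt (show (0 : ℝ) ≤ (m : ℝ) ^ 2 + (m : ℝ) by positivity)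
      have expand : (x - Real.sqrt ((m : ℝ) ^ 2 + (m : ℝ))) ^ 2
          = x ^ 2 - 2 * x * Real.sqrt ((m : ℝ) ^ 2 + (m : ℝ))
            + (Real.sqrt ((m : ℝ) ^ 2 + (m : ℝ))) ^ 2 := by ring
      rw [expand, h]
    rw [Finset.sum_congr rfl hcong, Finset.sum_add_distrib, Finset.sum_sub_distrib,
      Finset.sum_const, ← Finset.mul_sum, ← hSdef, sum_sq_add_aux, Finset.card_range]
    push_cast
    ring
  have hSb : 2 * S ≤ (M : ℝ) ^ 2 + 2 * M := by
    have := sum_sqrt_le_aux M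
    rw [← hSdef] at this
    linarith
  have hS0 : 0 ≤ S := Finset.sum_nonneg fun m _ => Real.sqrt_nonneg _
  have hxM : (M : ℝ) ≤ x := by
    have h' : Real.sqrt ((M : ℝ) ^ 2) ≤ x :=
      Real.sqrt_le_sqrt (by nlinarith [Nat.cast_nonneg (α := ℝ) M])
    rwa [Real.sqrt_sq (Nat.cast_nonneg M)] at h'
  have hxU : x ≤ (M : ℝ) + 3 / 2 := by nlinarith
  have hrpow : ρ ^ ((3 : ℝ) / 2) = x ^ 3 := by
    rw [show ((3 : ℝ) / 2) = (1 / 2) * 3 by norm_num, Real.rpow_mul hρ.le, ← Real.sqrt_eq_rpow,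
      show ((3 : ℝ)) = ((3 : ℕ) : ℝ) by norm_num, Real.rpow_natCast]
  rw [hsum, hrpow, ge_iff_le]
  have hB : (M + 1) * (x + M) - 2 * S - (x ^ 2 + M * x + (M : ℝ) ^ 2) / 3 ≥ 0 := by
    nlinarith [mul_nonneg (sub_nonneg.2 hxM) (show (0 : ℝ) ≤ (M : ℝ) + 3 - x by linarith)]
  nlinarith [mul_nonneg (sub_nonneg.2 hxM) hB,
    mul_nonneg (show (0 : ℝ) ≤ (M : ℝ) ^ 2 + 2 * M - 2 * S by linarith)
      (Nat.cast_nonneg (α := ℝ) M)]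
end

section
/- For every real E > n/2 with n a positive integer, ∑_{k ∈ ℕ, k < E − n/2} C(k+n−1, k) < (1/n!)·(E + 1/2)^n. -/
/-!
By the hockey-stick identity the sum is `C(K + n - 1, n) = K (K + 1) ⋯ (K + n - 1) / n!` with
`K = ⌈E - n/2⌉`. By AM-GM the product of the `n` factors is at most the `n`-th power of their mean
`K + (n - 1)/2`, and `K < E - n/2 + 1` makes this mean smaller than `E + 1/2`.
-/

open Finset Nat

theorem Real.prod_le_arith_mean_pow {ι : Type*} (s : Finset ι) (z : ι → ℝ)
    (hz : ∀ i ∈ s, 0 ≤ z i) : ∏ i ∈ s, z i ≤ ((∑ i ∈ s, z i) / #s) ^ #s := by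
  rcases s.eq_empty_or_nonempty with rfl | hs
  · simp
  have hcard : (#s : ℝ) ≠ 0 := by exact_mod_cast hs.card_ne_zero
  have amgm := Real.geom_mean_le_arith_mean_weighted s (fun _ ↦ (#s : ℝ)⁻¹) z
    (fun _ _ ↦ by positivity) (by simp [hcard]) hz
  rw [Real.finsetProd_rpow s z hz, ← Finset.mul_sum, inv_mul_eq_div] at amgm
  calc ∏ i ∈ s, z i = ((∏ i ∈ s, z i) ^ (#s : ℝ)⁻¹) ^ #s :=
        (Real.rpow_inv_natCast_pow (prod_nonneg hz) hs.card_ne_zero).symm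
    _ ≤ ((∑ i ∈ s, z i) / #s) ^ #s :=
        pow_le_pow_left₀ (Real.rpow_nonneg (prod_nonneg hz) _) amgm _

theorem prod_range_add_le_pow {x : ℝ} (hx : 0 ≤ x) (n : ℕ) :
    ∏ i ∈ range n, (x + i) ≤ (x + ((n : ℝ) - 1) / 2) ^ n := by
  rcases n.eq_zero_or_pos with rfl | hn
  · simp
  have hsum : ∑ i ∈ range n, (x + i) = n * (x + ((n : ℝ) - 1) / 2) := by
    have gauss : (∑ i ∈ range n, (i : ℝ)) * 2 = n * (n - 1) := by
      have := congrArg (Nat.cast : ℕ → ℝ) (Finset.sum_range_id_mul_two n)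
      push_cast [Nat.cast_sub hn] at this
      exact this
    rw [sum_add_distrib, sum_const, card_range, nsmul_eq_mul]
    linear_combination gauss / 2
  have := Real.prod_le_arith_mean_pow (range n) (fun i ↦ x + i) (fun i _ ↦ by positivity)
  rwa [hsum, card_range, mul_div_cancel_left₀ _ (by positivity)] at this

theorem Nat.cast_add_sub_one_choose_le (K n : ℕ) :
    ((K + n - 1).choose n : ℝ) ≤ ((K : ℝ) + ((n : ℝ) - 1) / 2) ^ n / n ! := by
  rw [le_div_iff₀' (by positivity), ← Nat.cast_mul, ← Nat.ascFactorial_eq_factorial_mul_choose',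
    Nat.ascFactorial_eq_prod_range, Nat.cast_prod]
  push_cast
  exact prod_range_add_le_pow K.cast_nonneg n

theorem Nat.sum_range_add_sub_one_choose {n : ℕ} (hn : 0 < n) (K : ℕ) :
    ∑ k ∈ range K, (k + n - 1).choose k = (K + n - 1).choose n := by
  obtain ⟨m, rfl⟩ := Nat.exists_eq_add_of_lt hn
  rcases K with _ | K
  · simp
  simp only [Nat.zero_add, ← Nat.add_assoc, Nat.add_sub_cancel]
  simp_rw [Nat.choose_symm_add]
  rw [Nat.sum_range_add_choose, Nat.add_right_comm]

theorem binom_sum_lt (n : ℕ) (hn : 0 < n) (E : ℝ) (hE : (n : ℝ) / 2 < E) :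
    (∑ k ∈ Finset.range ⌈E - (n : ℝ) / 2⌉₊, ((k + n - 1).choose k : ℝ)) <
      (1 / (n.factorial : ℝ)) * (E + 1 / 2) ^ n := by
  set K := ⌈E - (n : ℝ) / 2⌉₊
  have hK : (K : ℝ) < E - n / 2 + 1 := Nat.ceil_lt_add_one (by linarith)
  have hn' : (1 : ℝ) ≤ n := by exact_mod_cast hn
  rw [← Nat.cast_sum, Nat.sum_range_add_sub_one_choose hn]
  calc ((K + n - 1).choose n : ℝ) ≤ ((K : ℝ) + ((n : ℝ) - 1) / 2) ^ n / n ! :=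
        Nat.cast_add_sub_one_choose_le K n
    _ < (E + 1 / 2) ^ n / n ! := by
        have hc : 0 ≤ (K : ℝ) + ((n : ℝ) - 1) / 2 := by linarith [K.cast_nonneg (α := ℝ)]
        gcongr ?_ ^ n / _
        linarith
    _ = 1 / (n ! : ℝ) * (E + 1 / 2) ^ n := by ring
end

section
/- For every positive integer n, the constant c_n := n²/(n²+3n+2) − ((√(n+1) − √n)^{2/n}/(n+1)^{(n+1)/n}) · n(2√(n(n+1)) − n)/(n²+3n+2) satisfies 0 < c_n < n/(n+1). -/
set_option maxHeartbeats 1000000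


theorem c_n_bounds (n : ℕ) (hn : 0 < n) :
    0 < (n : ℝ) ^ 2 / ((n : ℝ) ^ 2 + 3 * n + 2) -
          ((Real.sqrt ((n : ℝ) + 1) - Real.sqrt n) ^ ((2 : ℝ) / n) /
              ((n : ℝ) + 1) ^ (((n : ℝ) + 1) / n)) *
            ((n : ℝ) * (2 * Real.sqrt ((n : ℝ) * ((n : ℝ) + 1)) - n) /
              ((n : ℝ) ^ 2 + 3 * n + 2)) ∧
      (n : ℝ) ^ 2 / ((n : ℝ) ^ 2 + 3 * n + 2) -
          ((Real.sqrt ((n : ℝ) + 1) - Real.sqrt n) ^ ((2 : ℝ) / n) /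
              ((n : ℝ) + 1) ^ (((n : ℝ) + 1) / n)) *
            ((n : ℝ) * (2 * Real.sqrt ((n : ℝ) * ((n : ℝ) + 1)) - n) /
              ((n : ℝ) ^ 2 + 3 * n + 2)) <
        (n : ℝ) / ((n : ℝ) + 1) := by
  have hx : (1:ℝ) ≤ (n:ℝ) := by exact_mod_cast hn
  set x : ℝ := (n:ℝ) with hxdef
  have hx0 : (0:ℝ) < x := lt_of_lt_of_le one_pos hx
  have hD : (0:ℝ) < x ^ 2 + 3 * x + 2 := by nlinarith
  set s := Real.sqrt (x + 1) with hs
  set t := Real.sqrt x with ht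
  have hs2 : s ^ 2 = x + 1 := Real.sq_sqrt (by linarith)
  have ht2 : t ^ 2 = x := Real.sq_sqrt hx0.le
  have hs0 : 0 ≤ s := Real.sqrt_nonneg _
  have ht0 : 0 ≤ t := Real.sqrt_nonneg _
  have hst0 : 0 < s - t :=
    sub_pos.mpr (Real.sqrt_lt_sqrt hx0.le (by linarith))
  have hs1 : 1 < s := by nlinarith
  have hst1 : s - t < 1 := by nlinarith
  set B := (s - t) ^ ((2:ℝ) / x) with hB
  set C := (x + 1) ^ ((x + 1) / x) with hC
  have hB0 : 0 < B := Real.rpow_pos_of_pos hst0 _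
  have hB1 : B < 1 := Real.rpow_lt_one hst0.le hst1 (by positivity)
  have hC0 : 0 < C := Real.rpow_pos_of_pos (by linarith) _
  have hCge : x + 1 ≤ C := by
    have h := Real.rpow_le_rpow_of_exponent_le (show (1:ℝ) ≤ x + 1 by linarith)
      (show (1:ℝ) ≤ (x + 1) / x by rw [le_div_iff₀ hx0]; linarith)
    rwa [Real.rpow_one] at h
  have hA0 : 0 < B / C := div_pos hB0 hC0
  have hA : (B / C) * (x + 1) < 1 := by
    rw [div_mul_eq_mul_div, div_lt_one hC0]
    nlinarith
  set u := Real.sqrt (x * (x + 1)) with hu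
  have hu2 : u ^ 2 = x * (x + 1) := Real.sq_sqrt (by nlinarith)
  have hu0 : 0 ≤ u := Real.sqrt_nonneg _
  have hul : x ≤ u := by nlinarith
  have hur : 2 * u ≤ 2 * x + 1 := by nlinarith
  have h2u : 0 ≤ 2 * u - x := by linarith
  have key : (B / C) * (x * (2 * u - x)) < x ^ 2 := by
    have h1 : x * (2 * u - x) ≤ x * (x + 1) :=
      mul_le_mul_of_nonneg_left (by linarith) hx0.le
    have h2 : (B / C) * (x * (2 * u - x)) ≤ (B / C) * (x * (x + 1)) :=
      mul_le_mul_of_nonneg_left h1 hA0.le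
    have h3 : (B / C) * (x + 1) * x < 1 * x := mul_lt_mul_of_pos_right hA hx0
    nlinarith
  constructor
  · have heq : (B / C) * (x * (2 * u - x) / (x ^ 2 + 3 * x + 2))
        = ((B / C) * (x * (2 * u - x))) / (x ^ 2 + 3 * x + 2) := by ring
    rw [heq, ← sub_div]
    exact div_pos (by linarith) hD
  · have h1 : 0 ≤ (B / C) * (x * (2 * u - x) / (x ^ 2 + 3 * x + 2)) :=
      mul_nonneg hA0.le (div_nonneg (mul_nonneg hx0.le h2u) hD.le)
    have h2 : x ^ 2 / (x ^ 2 + 3 * x + 2) < x / (x + 1) := by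
      rw [div_lt_div_iff₀ hD (by linarith)]
      nlinarith
    linarith
end
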